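/- arXiv:2509.20638 — 2 statements merged into one kernel-verified Lean document; each statement's English description precedes it below -/
import Mathlib

section
/- Let L ≥ 2 be an integer, let u_k = −1 + 2k/L for k = 0,…,L be equispaced knots with spacing Δ = 2/L, let h_k(x) = max(0, 1 − |x − u_k|/Δ) and ψ_k(x) = ∫_{−1}^{x} h_k(t) dt. For any real coefficients ξ_0,…,ξ_L, the function g(x) = Σ_{k=0}^{L} ξ_k ψ_k(x) is monotone nondecreasing on the interval [−1,1] if and only if ξ_k ≥ 0 for every k = 0,…,L. -/
/-!
The derivative of `g` is `∑ ξ k * h k`, and the hat functions are nodal on the knots: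
`h j (u k)` is `1` if `j = k` and `0` otherwise. So `g' (u k) = ξ k`, which must be
nonnegative when `g` is monotone on `[-1, 1]`; conversely, nonnegative coefficients make
`g'` a nonnegative combination of nonnegative hats, so `g` is monotone.
-/

open MeasureTheory Set Finset

lemma HasDerivAt.nonneg_of_monotoneOn_Icc {g : ℝ → ℝ} {a b p d : ℝ} (hab : a < b)
    (hp : p ∈ Icc a b) (hd : HasDerivAt g d p) (hg : MonotoneOn g (Icc a b)) : 0 ≤ d :=
  have hnontriv : (Icc a b).Nontrivial :=
    ⟨a, left_mem_Icc.2 hab.le, b, right_mem_Icc.2 hab.le, hab.ne⟩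
  hd.hasDerivWithinAt.nonneg_of_monotoneOn
    (isPreconnected_Icc.preperfect_of_nontrivial hnontriv p hp) hg

lemma le_abs_natCast_sub_mul {j k : ℕ} (hjk : j ≠ k) {Δ : ℝ} (hΔ : 0 ≤ Δ) :
    Δ ≤ |((k : ℝ) - j) * Δ| := by
  have hne : (k : ℤ) - j ≠ 0 := by omega
  have hone : (1 : ℝ) ≤ |(k : ℝ) - j| := by exact_mod_cast Int.one_le_abs hne
  rw [abs_mul, abs_of_nonneg hΔ]
  exact le_mul_of_one_le_left hΔ hone

lemma max_zero_one_sub_abs_div_eq_zero {x c Δ : ℝ} (hΔ : 0 < Δ) (hx : Δ ≤ |x - c|) :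
    max 0 (1 - |x - c| / Δ) = 0 :=
  max_eq_left (sub_nonpos.2 ((one_le_div hΔ).2 hx))

lemma sum_mul_hat_at_knot (ξ : ℕ → ℝ) {c Δ : ℝ} (hΔ : 0 < Δ) {n k : ℕ} (hk : k ∈ range n) :
    ∑ j ∈ range n, ξ j * max 0 (1 - |(c + k * Δ) - (c + j * Δ)| / Δ) = ξ k := by
  rw [Finset.sum_eq_single_of_mem k hk]
  · simp
  · intro j _ hjk
    have hsep : Δ ≤ |(c + k * Δ) - (c + j * Δ)| := by
      convert le_abs_natCast_sub_mul hjk hΔ.le using 2; ring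
    rw [max_zero_one_sub_abs_div_eq_zero hΔ hsep, mul_zero]

/-- For equispaced knots `u k = -1 + 2k/L` with spacing `Δ = 2/L`,
hat functions `h k` and their integrals `ψ k`, the linear combination
`g x = ∑ k, ξ k * ψ k x` is monotone nondecreasing on `[-1, 1]` if and only if
all coefficients `ξ k` (for `k = 0, …, L`) are nonnegative. -/
theorem hat_basis_monotone_iff_nonneg_coeffs
    (L : ℕ) (hL : 2 ≤ L)
    (u : ℕ → ℝ) (hu : ∀ k, u k = -1 + 2 * (k : ℝ) / (L : ℝ))
    (Δ : ℝ) (hΔ : Δ = 2 / (L : ℝ))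
    (h : ℕ → ℝ → ℝ) (hh : ∀ k x, h k x = max 0 (1 - |x - u k| / Δ))
    (ψ : ℕ → ℝ → ℝ) (hψ : ∀ k x, ψ k x = ∫ t in (-1 : ℝ)..x, h k t)
    (ξ : ℕ → ℝ)
    (g : ℝ → ℝ) (hg : ∀ x, g x = ∑ k ∈ Finset.range (L + 1), ξ k * ψ k x) :
    MonotoneOn g (Set.Icc (-1 : ℝ) 1) ↔ ∀ k ≤ L, 0 ≤ ξ k := by
  have hLpos : (0 : ℝ) < L := by exact_mod_cast (by omega : 0 < L)
  have hΔpos : 0 < Δ := hΔ ▸ div_pos two_pos hLpos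
  have hknot : ∀ k, u k = -1 + k * Δ := fun k => by rw [hu, hΔ]; ring
  have hh_cont : ∀ k, Continuous (h k) := fun k => by rw [funext (hh k)]; fun_prop
  have hg' : ∀ x, HasDerivAt g (∑ k ∈ range (L + 1), ξ k * h k x) x := fun x => by
    rw [funext hg]
    refine HasDerivAt.fun_sum fun k _ => HasDerivAt.const_mul (ξ k) ?_
    rw [funext (hψ k)]
    exact ((hh_cont k).integral_hasStrictDerivAt _ _).hasDerivAt
  constructor
  · intro hmono k hk
    have hk_mem : u k ∈ Icc (-1 : ℝ) 1 := by
      have hkL : (k : ℝ) ≤ L := by exact_mod_cast hk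
      rw [hu]
      constructor
      · have : (0 : ℝ) ≤ 2 * k / L := by positivity
        linarith
      · have : 2 * (k : ℝ) / L ≤ 2 := (div_le_iff₀ hLpos).2 (by linarith)
        linarith
    have hderiv_knot : ∑ j ∈ range (L + 1), ξ j * h j (u k) = ξ k := by
      simp_rw [hh, hknot]
      exact sum_mul_hat_at_knot ξ hΔpos (mem_range.2 (Nat.lt_succ_of_le hk))
    exact (hderiv_knot ▸ hg' (u k)).nonneg_of_monotoneOn_Icc (by norm_num) hk_mem hmono
  · intro hξ
    refine (monotone_of_hasDerivAt_nonneg hg' fun x => sum_nonneg fun k hk => ?_).monotoneOn _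
    exact mul_nonneg (hξ k (Nat.lt_succ_iff.1 (mem_range.1 hk))) (by rw [hh]; exact le_max_left _ _)
end

section
/- Let p ≥ 1, let K ⊆ ℝ^p be a bounded convex set with nonempty interior, let g₁, g₂ : ℝ → ℝ be continuous monotone nondecreasing functions, and let β₁, β₂ ∈ ℝ^p satisfy ‖β₁‖ = ‖β₂‖ = 1. Suppose the map x ↦ g₁(⟪β₁, x⟫) is not constant on K, and that g₁(⟪β₁, x⟫) = g₂(⟪β₂, x⟫) for every x ∈ K. Then β₁ = β₂ and g₁(t) = g₂(t) for every t in the set {⟪β₁, x⟫ : x ∈ K}. -/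
/-!
If `β₁ ≠ β₂` have the same norm, then `v = β₁ - β₂` satisfies `⟪β₂, v⟫ = -⟪β₁, v⟫ < 0`.
Moving from an interior point `z` of `K` to `z ± τ v`, the first link sees its argument
increase by `τ ⟪β₁, v⟫` while the second sees its argument decrease by the same amount, so two
nondecreasing functions can only agree there if `g₁` is flat around `⟪β₁, z⟫`. Thus `g₁` is
locally constant on the connected set `⟪β₁, interior K⟫`, hence constant on it, and by
continuity constant on `⟪β₁, K⟫ ⊆ closure ⟪β₁, interior K⟫`, contradicting non-constancy.
-/

open scoped RealInnerProductSpace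
open Set Filter Topology

theorem IsPreconnected.apply_eq_of_eventually_eq {X Y : Type*} [TopologicalSpace X]
    {S : Set X} (hS : IsPreconnected S) {f : X → Y} (hf : ∀ x ∈ S, ∀ᶠ y in 𝓝 x, f y = f x)
    {x y : X} (hx : x ∈ S) (hy : y ∈ S) : f x = f y := by
  have := isPreconnected_iff_preconnectedSpace.mp hS
  have hloc : IsLocallyConstant (S.domRestrict f) :=
    (IsLocallyConstant.iff_eventually_eq _).2 fun z =>
      continuous_subtype_val.continuousAt.eventually (hf z z.2)
  exact hloc.apply_eq_of_isPreconnected isPreconnected_univ (x := ⟨x, hx⟩) (y := ⟨y, hy⟩)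
    trivial trivial

theorem Monotone.eqOn_Icc_of_eq {α β : Type*} [Preorder α] [PartialOrder β] {g : α → β}
    (hg : Monotone g) {a b : α} (hab : g a = g b) : EqOn g (fun _ => g a) (Icc a b) :=
  fun _ ht => le_antisymm (hab ▸ hg ht.2) (hg ht.1)

theorem Monotone.eventually_eq_of_opposite_shifts {g₁ g₂ : ℝ → ℝ} (hg₁ : Monotone g₁)
    (hg₂ : Monotone g₂) {s r h : ℝ} (hh : 0 < h) (hlo : g₁ (s - h) = g₂ (r + h))
    (hhi : g₁ (s + h) = g₂ (r - h)) : ∀ᶠ t in 𝓝 s, g₁ t = g₁ s := by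
  have hflat : g₁ (s - h) = g₁ (s + h) :=
    le_antisymm (hg₁ (by linarith)) (by rw [hlo, hhi]; exact hg₂ (by linarith))
  have hconst := hg₁.eqOn_Icc_of_eq hflat
  filter_upwards [Icc_mem_nhds (by linarith : s - h < s) (by linarith : s < s + h)] with t ht
  exact (hconst ht).trans (hconst ⟨by linarith, by linarith⟩).symm

section InnerProductSpace

variable {E : Type*} [NormedAddCommGroup E] [InnerProductSpace ℝ E]

theorem inner_sub_eq_neg_of_norm_eq {u w : E} (h : ‖u‖ = ‖w‖) :
    ⟪w, u - w⟫ = -⟪u, u - w⟫ := by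
  have := (real_inner_add_sub_eq_zero_iff u w).mpr h
  rw [inner_add_left] at this
  linarith

theorem inner_sub_pos_of_norm_eq {u w : E} (h : ‖u‖ = ‖w‖) (hne : u ≠ w) :
    0 < ⟪u, u - w⟫ := by
  have hpos : 0 < ⟪u - w, u - w⟫ := real_inner_self_pos.mpr (sub_ne_zero.mpr hne)
  rw [inner_sub_left, inner_sub_eq_neg_of_norm_eq h] at hpos
  linarith

variable {K : Set E} {g₁ g₂ : ℝ → ℝ} {β₁ β₂ : E}

theorem eventually_eq_of_comp_inner_eq_comp_inner (hg₁ : Monotone g₁) (hg₂ : Monotone g₂)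
    (hβ : ‖β₁‖ = ‖β₂‖) (hne : β₁ ≠ β₂) (heq : ∀ x ∈ K, g₁ ⟪β₁, x⟫ = g₂ ⟪β₂, x⟫)
    {z : E} (hz : z ∈ interior K) : ∀ᶠ t in 𝓝 ⟪β₁, z⟫, g₁ t = g₁ ⟪β₁, z⟫ := by
  have hmove (σ : ℝ) (hσ : z + σ • (β₁ - β₂) ∈ K) :
      g₁ (⟪β₁, z⟫ + σ * ⟪β₁, β₁ - β₂⟫) = g₂ (⟪β₂, z⟫ - σ * ⟪β₁, β₁ - β₂⟫) := by
    have := heq _ hσ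
    rwa [inner_add_right, inner_add_right, real_inner_smul_right, real_inner_smul_right,
      inner_sub_eq_neg_of_norm_eq hβ, mul_neg, ← sub_eq_add_neg] at this
  have hline (σ : ℝ) : ∀ᶠ τ in 𝓝 (0 : ℝ), z + (σ * τ) • (β₁ - β₂) ∈ K :=
    (Continuous.tendsto' (by fun_prop) 0 z (by simp)).eventually
      (mem_interior_iff_mem_nhds.mp hz)
  obtain ⟨τ, ⟨hplus, hminus⟩, hτ⟩ :=
    (((hline 1).and (hline (-1))).filter_mono nhdsWithin_le_nhds |>.and
      (self_mem_nhdsWithin (s := Ioi 0))).exists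
  refine hg₁.eventually_eq_of_opposite_shifts hg₂ (r := ⟪β₂, z⟫)
    (mul_pos hτ (inner_sub_pos_of_norm_eq hβ hne)) ?_ ?_
  · convert hmove _ hminus using 2 <;> ring
  · convert hmove _ hplus using 2 <;> ring

theorem Convex.exists_const_of_comp_inner_eq_comp_inner (hKconv : Convex ℝ K)
    (hKint : (interior K).Nonempty) (hg₁c : Continuous g₁) (hg₁ : Monotone g₁)
    (hg₂ : Monotone g₂) (hβ : ‖β₁‖ = ‖β₂‖) (hne : β₁ ≠ β₂)
    (heq : ∀ x ∈ K, g₁ ⟪β₁, x⟫ = g₂ ⟪β₂, x⟫) : ∃ c : ℝ, ∀ x ∈ K, g₁ ⟪β₁, x⟫ = c := by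
  obtain ⟨x₀, hx₀⟩ := hKint
  have hproj : Continuous fun x : E => ⟪β₁, x⟫ := continuous_const.inner continuous_id
  have hI : IsPreconnected ((fun x => ⟪β₁, x⟫) '' interior K) :=
    hKconv.interior.isPreconnected.image _ hproj.continuousOn
  have hconst : (fun x => ⟪β₁, x⟫) '' interior K ⊆ {t | g₁ t = g₁ ⟪β₁, x₀⟫} := by
    rintro _ ⟨z, hz, rfl⟩
    refine hI.apply_eq_of_eventually_eq ?_ ⟨z, hz, rfl⟩ ⟨x₀, hx₀, rfl⟩
    rintro _ ⟨y, hy, rfl⟩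
    exact eventually_eq_of_comp_inner_eq_comp_inner hg₁ hg₂ hβ hne heq hy
  refine ⟨g₁ ⟪β₁, x₀⟫, fun x hx => ?_⟩
  have hxcl : x ∈ closure (interior K) := by
    rw [hKconv.closure_interior_eq_closure_of_nonempty_interior ⟨x₀, hx₀⟩]
    exact subset_closure hx
  exact (isClosed_eq hg₁c continuous_const).closure_subset_iff.2 hconst
    (image_closure_subset_closure_image hproj ⟨x, hxcl, rfl⟩)

end InnerProductSpace

theorem single_index_identifiability_general
    (p : ℕ)
    (K : Set (EuclideanSpace ℝ (Fin p)))
    (hKconv : Convex ℝ K)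
    (hKint : (interior K).Nonempty)
    (g₁ g₂ : ℝ → ℝ) (hg₁c : Continuous g₁)
    (hg₁m : Monotone g₁) (hg₂m : Monotone g₂)
    (β₁ β₂ : EuclideanSpace ℝ (Fin p)) (hβ₁ : ‖β₁‖ = 1) (hβ₂ : ‖β₂‖ = 1)
    (hnc : ¬ ∃ c : ℝ, ∀ x ∈ K, g₁ ⟪β₁, x⟫ = c)
    (heq : ∀ x ∈ K, g₁ ⟪β₁, x⟫ = g₂ ⟪β₂, x⟫) :
    β₁ = β₂ ∧ ∀ t ∈ (fun x => ⟪β₁, x⟫) '' K, g₁ t = g₂ t := by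
  have hβ : β₁ = β₂ := by
    by_contra hne
    exact hnc (hKconv.exists_const_of_comp_inner_eq_comp_inner hKint hg₁c hg₁m hg₂m
      (hβ₁.trans hβ₂.symm) hne heq)
  refine ⟨hβ, ?_⟩
  rintro _ ⟨x, hx, rfl⟩
  exact hβ ▸ heq x hx

/-- Identifiability of the single-index part of the ST-GP model.
If `K ⊆ ℝ^p` is bounded convex with nonempty interior, `g₁, g₂` are continuous
monotone nondecreasing links, `‖β₁‖ = ‖β₂‖ = 1`, `x ↦ g₁⟪β₁, x⟫` is not
constant on `K`, and `g₁⟪β₁, x⟫ = g₂⟪β₂, x⟫` on `K`, then `β₁ = β₂` and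
`g₁ = g₂` on `{⟪β₁, x⟫ : x ∈ K}`. -/
theorem single_index_identifiability
    (p : ℕ) (hp : 1 ≤ p)
    (K : Set (EuclideanSpace ℝ (Fin p)))
    (hKbdd : Bornology.IsBounded K) (hKconv : Convex ℝ K)
    (hKint : (interior K).Nonempty)
    (g₁ g₂ : ℝ → ℝ) (hg₁c : Continuous g₁) (hg₂c : Continuous g₂)
    (hg₁m : Monotone g₁) (hg₂m : Monotone g₂)
    (β₁ β₂ : EuclideanSpace ℝ (Fin p)) (hβ₁ : ‖β₁‖ = 1) (hβ₂ : ‖β₂‖ = 1)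
    (hnc : ¬ ∃ c : ℝ, ∀ x ∈ K, g₁ ⟪β₁, x⟫ = c)
    (heq : ∀ x ∈ K, g₁ ⟪β₁, x⟫ = g₂ ⟪β₂, x⟫) :
    β₁ = β₂ ∧ ∀ t ∈ (fun x => ⟪β₁, x⟫) '' K, g₁ t = g₂ t :=
  single_index_identifiability_general p K hKconv hKint g₁ g₂ hg₁c hg₁m hg₂m β₁ β₂ hβ₁ hβ₂ hnc heq
end
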